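/- arXiv:0908.2494 — 3 statements merged into one kernel-verified Lean document; each statement's English description precedes it below -/
import Mathlib

section
/- Let 0 ≤ p ≤ 1/2 and let s be a positive integer. Then the binomial tail satisfies Σ_{q=⌈s/2⌉}^{s} C(s,q)·p^q·(1−p)^{s−q} ≤ (2·√(p(1−p)))^s. -/
open Finset

theorem Nat.sum_choose_le_two_pow (n : ℕ) (t : Finset ℕ) : ∑ k ∈ t, n.choose k ≤ 2 ^ n :=
  calc ∑ k ∈ t, n.choose k
      ≤ ∑ k ∈ range (n + 1), n.choose k :=
        sum_le_sum_of_ne_zero fun _ _ hk ↦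
          mem_range_succ_iff.2 (not_lt.1 (mt Nat.choose_eq_zero_iff.2 hk))
    _ = 2 ^ n := Nat.sum_range_choose n

/-- Since `a ≤ √(ab)`, trading the surplus `2q - s` factors of `a` for `√(ab)` only increases
the product. -/
theorem pow_mul_pow_sub_le_sqrt_mul_pow {a b : ℝ} (ha : 0 ≤ a) (hab : a ≤ b) {q s : ℕ}
    (hqs : q ≤ s) (hsq : s ≤ 2 * q) : a ^ q * b ^ (s - q) ≤ √(a * b) ^ s := by
  have hab0 : 0 ≤ a * b := mul_nonneg ha (ha.trans hab)
  have hsqrt : a ≤ √(a * b) := Real.le_sqrt_of_sq_le (by nlinarith)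
  calc a ^ q * b ^ (s - q)
      = (a * b) ^ (s - q) * a ^ (2 * q - s) := by
        rw [mul_pow, mul_right_comm, ← pow_add]
        congr 2
        omega
    _ ≤ (√(a * b) ^ 2) ^ (s - q) * √(a * b) ^ (2 * q - s) := by
        rw [Real.sq_sqrt hab0]
        gcongr
    _ = √(a * b) ^ s := by
        rw [← pow_mul, ← pow_add]
        congr 1
        omega

theorem stmt_4_general (p : ℝ) (hp0 : 0 ≤ p) (hp : p ≤ 1 / 2) (s : ℕ) :
    ∑ q ∈ Finset.Icc ((s + 1) / 2) s,
        (s.choose q : ℝ) * p ^ q * (1 - p) ^ (s - q)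
      ≤ (2 * Real.sqrt (p * (1 - p))) ^ s := by
  have hterm : ∀ q ∈ Icc ((s + 1) / 2) s,
      (s.choose q : ℝ) * p ^ q * (1 - p) ^ (s - q) ≤ s.choose q * √(p * (1 - p)) ^ s := by
    intro q hq
    rw [mem_Icc] at hq
    rw [mul_assoc]
    gcongr
    exact pow_mul_pow_sub_le_sqrt_mul_pow hp0 (by linarith) hq.2 (by omega)
  have hchoose : ∑ q ∈ Icc ((s + 1) / 2) s, (s.choose q : ℝ) ≤ 2 ^ s := by
    exact_mod_cast Nat.sum_choose_le_two_pow s _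
  calc _ ≤ ∑ q ∈ Icc ((s + 1) / 2) s, (s.choose q : ℝ) * √(p * (1 - p)) ^ s :=
        sum_le_sum hterm
    _ = (∑ q ∈ Icc ((s + 1) / 2) s, (s.choose q : ℝ)) * √(p * (1 - p)) ^ s := (sum_mul ..).symm
    _ ≤ 2 ^ s * √(p * (1 - p)) ^ s := by gcongr
    _ = (2 * √(p * (1 - p))) ^ s := (mul_pow _ _ _).symm

theorem stmt_4 (p : ℝ) (hp0 : 0 ≤ p) (hp : p ≤ 1 / 2) (s : ℕ) (hs : 0 < s) :
    ∑ q ∈ Finset.Icc ((s + 1) / 2) s,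
        (s.choose q : ℝ) * p ^ q * (1 - p) ^ (s - q)
      ≤ (2 * Real.sqrt (p * (1 - p))) ^ s :=
  stmt_4_general p hp0 hp s
end

section
/- Let 0 < p ≤ 1/2 and let s be a positive integer. Then Σ_{q=⌈s/2⌉}^{s} C(s,q)·p^q·(1−p)^{s−q} ≥ (1/(4(s+1)))·√(p/(1−p))·(2√(p(1−p)))^s. -/
/-!
Keep only the term `q = ⌈s/2⌉` of the tail. Its binomial coefficient is the largest of the
`s + 1` coefficients summing to `2 ^ s`, so it is at least `2 ^ s / (s + 1)`. Its weight
`p ^ q (1 - p) ^ (s - q)` equals `√(p(1-p)) ^ s` times `√(p/(1-p)) ^ (2q - s)`, where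
`2q - s ∈ {0, 1}` and `√(p/(1-p)) ≤ 1`.
-/

theorem Nat.two_pow_le_succ_mul_choose_succ_div_two (s : ℕ) :
    2 ^ s ≤ (s + 1) * s.choose ((s + 1) / 2) := by
  have hmiddle : s.choose ((s + 1) / 2) = s.choose (s / 2) := by
    rw [show (s + 1) / 2 = s - s / 2 by omega, Nat.choose_symm (Nat.div_le_self s 2)]
  calc 2 ^ s = ∑ i ∈ Finset.range (s + 1), s.choose i := (Nat.sum_range_choose s).symm
    _ ≤ (Finset.range (s + 1)).card • s.choose (s / 2) :=
        Finset.sum_le_card_nsmul _ _ _ fun i _ ↦ Nat.choose_le_middle i s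
    _ = (s + 1) * s.choose ((s + 1) / 2) := by rw [hmiddle, Finset.card_range, smul_eq_mul]

theorem Real.sqrt_div_mul_sqrt_mul {a b : ℝ} (ha : 0 ≤ a) (hb : 0 < b) :
    √(a / b) * √(a * b) = a := by
  rw [← Real.sqrt_mul (by positivity), show a / b * (a * b) = a ^ 2 by field_simp,
    Real.sqrt_sq ha]

theorem Real.sqrt_div_mul_sqrt_mul_pow_le {a b : ℝ} (ha : 0 ≤ a) (hb : 0 < b) (hab : a ≤ b)
    (s : ℕ) : √(a / b) * √(a * b) ^ s ≤ a ^ ((s + 1) / 2) * b ^ (s - (s + 1) / 2) := by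
  obtain ⟨m, rfl | rfl⟩ := Nat.even_or_odd' s
  · have hratio : √(a / b) ≤ 1 := Real.sqrt_le_one.mpr ((div_le_one hb).mpr hab)
    rw [show (2 * m + 1) / 2 = m by omega, show 2 * m - m = m by omega, pow_mul,
      Real.sq_sqrt (by positivity), ← mul_pow]
    exact mul_le_of_le_one_left (by positivity) hratio
  · rw [show (2 * m + 1 + 1) / 2 = m + 1 by omega, show 2 * m + 1 - (m + 1) = m by omega,
      pow_succ, pow_mul, Real.sq_sqrt (by positivity), mul_left_comm,
      Real.sqrt_div_mul_sqrt_mul ha hb]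
    exact le_of_eq (by ring)

theorem stmt_5_general (p : ℝ) (hp0 : 0 < p) (hp : p ≤ 1 / 2) (s : ℕ) :
    (1 / (4 * ((s : ℝ) + 1))) * Real.sqrt (p / (1 - p)) *
        (2 * Real.sqrt (p * (1 - p))) ^ s
      ≤ ∑ q ∈ Finset.Icc ((s + 1) / 2) s,
          (s.choose q : ℝ) * p ^ q * (1 - p) ^ (s - q) := by
  set Q := (s + 1) / 2
  have hchoose : (2 : ℝ) ^ s / (s + 1) ≤ s.choose Q := by
    rw [div_le_iff₀ (by positivity), mul_comm]
    exact_mod_cast Nat.two_pow_le_succ_mul_choose_succ_div_two s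
  have h1p : 0 < 1 - p := by linarith
  have hweight := Real.sqrt_div_mul_sqrt_mul_pow_le hp0.le h1p (by linarith : p ≤ 1 - p) s
  calc (1 / (4 * ((s : ℝ) + 1))) * √(p / (1 - p)) * (2 * √(p * (1 - p))) ^ s
      = 1 / 4 * (2 ^ s / (s + 1) * (√(p / (1 - p)) * √(p * (1 - p)) ^ s)) := by
        rw [mul_pow]; field_simp
    _ ≤ 2 ^ s / (s + 1) * (√(p / (1 - p)) * √(p * (1 - p)) ^ s) :=
        mul_le_of_le_one_left (by positivity) (by norm_num)
    _ ≤ s.choose Q * (p ^ Q * (1 - p) ^ (s - Q)) := by gcongr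
    _ ≤ ∑ q ∈ Finset.Icc Q s, (s.choose q : ℝ) * p ^ q * (1 - p) ^ (s - q) := by
        rw [← mul_assoc]
        exact Finset.single_le_sum (f := fun q ↦ (s.choose q : ℝ) * p ^ q * (1 - p) ^ (s - q))
          (fun q _ ↦ by positivity) (Finset.mem_Icc.mpr ⟨le_rfl, by omega⟩)

theorem stmt_5 (p : ℝ) (hp0 : 0 < p) (hp : p ≤ 1 / 2) (s : ℕ) (hs : 0 < s) :
    (1 / (4 * ((s : ℝ) + 1))) * Real.sqrt (p / (1 - p)) *
        (2 * Real.sqrt (p * (1 - p))) ^ s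
      ≤ ∑ q ∈ Finset.Icc ((s + 1) / 2) s,
          (s.choose q : ℝ) * p ^ q * (1 - p) ^ (s - q) :=
  stmt_5_general p hp0 hp s
end

section
/- Let Z₁,...,Z_t be i.i.d. variables in [0,1] with mean μ ≠ d₀, weights m_i > 0 with Σ m_i = m, and β = (1/m)Σ m_i Z_i. Then for any constant c > 0 there exists a constant a > 0 (depending only on c) such that for sufficiently large m, E[exp(−c·m·(β − d₀)²)] ≤ exp(−a·(d₀−μ)²·m²/(m₁² + ... + m_t²)). -/
/-!
Write `β - d₀ = X - e` with `X = β - μ = ∑ (mᵢ / m) (Zᵢ - μ)` and `e = d₀ - μ`.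
By Hoeffding's lemma and independence, `X` is sub-Gaussian with variance proxy
`v = ∑ mᵢ² / (4 m²)`. Completing the square gives `exp (-k u²) ≤ exp (l u + l² / (4k))` for every `l`, hence
`E exp (-k (X - e)²) ≤ exp (l² / (4k) - l e + v l² / 2)`, and the optimal `l` yields
`exp (-e² / (1/k + 2v))`. For `k = c m`, the bound `m ≤ ∑ mᵢ²` turns this into
`exp (-a e² m² / ∑ mᵢ²)` with `a = (1/c + 1/2)⁻¹`, for every `m ≥ 1`.
-/

open MeasureTheory ProbabilityTheory Real
open scoped NNReal

lemma neg_mul_sq_le_mul_add_sq_div {k : ℝ} (hk : 0 < k) (u l : ℝ) :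
    -(k * u ^ 2) ≤ l * u + l ^ 2 / (4 * k) := by
  have hsq : 0 ≤ k * (u + l / (2 * k)) ^ 2 := by positivity
  have hexpand : k * (u + l / (2 * k)) ^ 2 = k * u ^ 2 + l * u + l ^ 2 / (4 * k) := by
    field_simp; ring
  linarith

namespace ProbabilityTheory

variable {Ω : Type*} {mΩ : MeasurableSpace Ω} {P : Measure Ω}

lemma HasSubgaussianMGF.integral_exp_neg_mul_sq_sub_le {X : Ω → ℝ} {v : ℝ≥0}
    (hX : HasSubgaussianMGF X v P) {k : ℝ} (hk : 0 < k) (e : ℝ) :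
    ∫ ω, exp (-k * (X ω - e) ^ 2) ∂P ≤ exp (-e ^ 2 / (1 / k + 2 * v)) := by
  set A : ℝ := 1 / (4 * k) + v / 2
  have hA : 0 < A := by positivity
  set l : ℝ := e / (2 * A)
  have pointwise :
      ∀ ω, exp (-k * (X ω - e) ^ 2) ≤ exp (l ^ 2 / (4 * k) - l * e) * exp (l * X ω) := by
    intro ω
    rw [← exp_add, exp_le_exp]
    nlinarith [neg_mul_sq_le_mul_add_sq_div hk (X ω - e) l]
  calc ∫ ω, exp (-k * (X ω - e) ^ 2) ∂P
      ≤ ∫ ω, exp (l ^ 2 / (4 * k) - l * e) * exp (l * X ω) ∂P :=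
        integral_mono_of_nonneg (ae_of_all _ fun ω => (exp_pos _).le)
          ((hX.integrable_exp_mul l).const_mul _) (ae_of_all _ pointwise)
    _ = exp (l ^ 2 / (4 * k) - l * e) * mgf X P l := integral_const_mul _ _
    _ ≤ exp (l ^ 2 / (4 * k) - l * e) * exp (v * l ^ 2 / 2) := by
        gcongr; exact hX.mgf_le l
    _ = exp (-e ^ 2 / (1 / k + 2 * v)) := by
        rw [← exp_add]; congr 1
        simp only [l, A]; field_simp; ring

lemma hasSubgaussianMGF_sum_mul_sub_integral {ι : Type*} [Fintype ι] [IsProbabilityMeasure P]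
    {Z : ι → Ω → ℝ} (hZ : ∀ i, AEMeasurable (Z i) P) (hindep : iIndepFun Z P) {a b : ℝ}
    (hab : ∀ i, ∀ᵐ ω ∂P, Z i ω ∈ Set.Icc a b) (w : ι → ℝ) :
    HasSubgaussianMGF (fun ω ↦ ∑ i, w i * (Z i ω - P[Z i]))
      ((b - a) ^ 2 / 4 * ∑ i, w i ^ 2).toNNReal P := by
  have hindep' : iIndepFun (fun i ω ↦ w i * (Z i ω - ∫ ω, Z i ω ∂P)) P :=
    hindep.comp (fun i x ↦ w i * (x - ∫ ω, Z i ω ∂P)) fun i ↦ by fun_prop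
  convert HasSubgaussianMGF.sum_of_iIndepFun hindep' fun i _ ↦
    (hasSubgaussianMGF_of_mem_Icc (hZ i) (hab i)).const_mul (w i) using 1
  apply NNReal.eq
  rw [Real.coe_toNNReal _ (by positivity), Finset.mul_sum, NNReal.coe_sum]
  refine Finset.sum_congr rfl fun i _ ↦ ?_
  -- Mathlib's proxy `⟨w i ^ 2, _⟩ * _` is typed as a subtype, which the `NNReal` cast lemmas miss.
  change _ = w i ^ 2 * (((‖b - a‖₊ / 2) ^ 2 : ℝ≥0) : ℝ)
  push_cast
  rw [Real.norm_eq_abs, div_pow, sq_abs]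
  ring

end ProbabilityTheory

lemma inv_add_mul_sq_div_le_sq_div {c m s : ℝ} (hc : 0 < c) (hm : 0 < m) (hms : m ≤ s) (e : ℝ) :
    (1 / c + 1 / 2)⁻¹ * e ^ 2 * m ^ 2 / s ≤ e ^ 2 / (1 / (c * m) + s / (2 * m ^ 2)) := by
  have hs : 0 < s := hm.trans_le hms
  have hden : 1 / (c * m) + s / (2 * m ^ 2) ≤ (1 / c + 1 / 2) * (s / m ^ 2) := by
    have : 1 / (c * m) ≤ 1 / c * (s / m ^ 2) := by
      rw [div_mul_div_comm, one_mul, div_le_div_iff₀ (by positivity) (by positivity)]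
      nlinarith [mul_le_mul_of_nonneg_left hms (mul_pos hc hm).le]
    linarith [show s / (2 * m ^ 2) = 1 / 2 * (s / m ^ 2) by ring]
  calc (1 / c + 1 / 2)⁻¹ * e ^ 2 * m ^ 2 / s = e ^ 2 / ((1 / c + 1 / 2) * (s / m ^ 2)) := by
        field_simp
    _ ≤ e ^ 2 / (1 / (c * m) + s / (2 * m ^ 2)) := by gcongr

theorem stmt_12 :
    ∀ c : ℝ, 0 < c → ∃ a : ℝ, 0 < a ∧
      ∀ μ d₀ : ℝ, μ ≠ d₀ → ∃ M₀ : ℕ,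
        ∀ (t m : ℕ) (mi : Fin t → ℕ), (∀ i, 0 < mi i) → (∑ i, mi i = m) → M₀ ≤ m →
          ∀ (Ω : Type) (_ : MeasurableSpace Ω) (P : Measure Ω), IsProbabilityMeasure P →
            ∀ Z : Fin t → Ω → ℝ, (∀ i, Measurable (Z i)) →
              iIndepFun Z P →
              (∀ i j, Measure.map (Z i) P = Measure.map (Z j) P) →
              (∀ i ω, Z i ω ∈ Set.Icc (0 : ℝ) 1) →
              (∀ i, ∫ ω, Z i ω ∂P = μ) →
              ∫ ω, Real.exp
                  (-c * (m : ℝ) * ((1 / (m : ℝ)) * (∑ i, (mi i : ℝ) * Z i ω) - d₀) ^ 2) ∂P ≤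
                Real.exp (-a * (d₀ - μ) ^ 2 * (m : ℝ) ^ 2 / ∑ i, (mi i : ℝ) ^ 2) := by
  intro c hc
  refine ⟨(1 / c + 1 / 2)⁻¹, by positivity, fun μ d₀ _ ↦ ⟨1, ?_⟩⟩
  intro t m mi _ hsum hm Ω _ P _ Z hZ hindep _ hZ01 hmean
  have hm0 : (0 : ℝ) < m := by exact_mod_cast hm
  have hsum' : ∑ i, (mi i : ℝ) = m := by exact_mod_cast hsum
  have hms : (m : ℝ) ≤ ∑ i, (mi i : ℝ) ^ 2 := by
    rw [← hsum]; push_cast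
    exact Finset.sum_le_sum fun i _ ↦ by exact_mod_cast Nat.le_self_pow two_ne_zero (mi i)
  have hX := hasSubgaussianMGF_sum_mul_sub_integral (fun i ↦ (hZ i).aemeasurable) hindep
    (fun i ↦ ae_of_all _ (hZ01 i)) (fun i ↦ (mi i : ℝ) / m)
  have hcentred : ∀ ω, (1 / (m : ℝ)) * (∑ i, (mi i : ℝ) * Z i ω) - d₀ =
      (∑ i, (mi i : ℝ) / m * (Z i ω - ∫ ω, Z i ω ∂P)) - (d₀ - μ) := by
    intro ω
    simp only [hmean, div_mul_eq_mul_div, mul_sub, Finset.sum_sub_distrib, ← Finset.sum_div,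
      ← Finset.sum_mul, hsum', Finset.mul_sum]
    field_simp
    ring
  have hparam : ((((1 : ℝ) - 0) ^ 2 / 4 * ∑ i, ((mi i : ℝ) / m) ^ 2).toNNReal : ℝ) =
      (∑ i, (mi i : ℝ) ^ 2) / (4 * m ^ 2) := by
    rw [Real.coe_toNNReal _ (by positivity)]
    simp only [div_pow, ← Finset.sum_div]
    ring
  calc _ = ∫ ω, exp (-(c * m) *
          ((∑ i, (mi i : ℝ) / m * (Z i ω - ∫ ω, Z i ω ∂P)) - (d₀ - μ)) ^ 2) ∂P := by
        simp only [hcentred, neg_mul, mul_assoc]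
    _ ≤ exp (-(d₀ - μ) ^ 2 / (1 / (c * m) + 2 * _)) :=
        hX.integral_exp_neg_mul_sq_sub_le (by positivity) _
    _ ≤ _ := by
        rw [exp_le_exp, hparam, neg_mul, neg_mul, neg_div, neg_div, neg_le_neg_iff]
        convert inv_add_mul_sq_div_le_sq_div hc hm0 hms (d₀ - μ) using 3
        ring
end
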